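/- For every natural number i ≥ 1, C(F(2i+2)·F(2i+3), F(2i)·F(2i+3)) = C(F(2i+2)·F(2i+3) − 1, F(2i)·F(2i+3) + 1), where F denotes the Fibonacci sequence and C the binomial coefficient. -/
import Mathlib

lemma choose_shift_aux (k e : ℕ)
    (h : (k + e + 2) * (k + 1) = (e + 2) * (e + 1)) :
    Nat.choose (k + e + 2) k = Nat.choose (k + e + 1) (k + 1) := by
  have h1 := Nat.choose_mul_factorial_mul_factorial (show k ≤ k + e + 2 by omega)
  have h2 := Nat.choose_mul_factorial_mul_factorial (show k + 1 ≤ k + e + 1 by omega)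
  have hs1 : k + e + 2 - k = e + 2 := by omega
  have hs2 : k + e + 1 - (k + 1) = e := by omega
  rw [hs1] at h1
  rw [hs2] at h2
  have hfact : Nat.factorial (k + e + 2) = (k + e + 2) * Nat.factorial (k + e + 1) :=
    Nat.factorial_succ _
  have he2 : Nat.factorial (e + 2) = (e + 2) * (e + 1) * Nat.factorial e := by
    rw [Nat.factorial_succ, Nat.factorial_succ]; ring
  have hk1 : Nat.factorial (k + 1) = (k + 1) * Nat.factorial k := Nat.factorial_succ _
  have key : Nat.choose (k + e + 2) k *
        ((e + 2) * (e + 1) * (Nat.factorial k * Nat.factorial e)) =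
      Nat.choose (k + e + 1) (k + 1) *
        ((e + 2) * (e + 1) * (Nat.factorial k * Nat.factorial e)) := by
    have l1 : Nat.choose (k + e + 2) k *
        ((e + 2) * (e + 1) * (Nat.factorial k * Nat.factorial e)) =
        Nat.factorial (k + e + 2) := by
      rw [← h1, he2]; ring
    rw [l1, hfact, ← h2, hk1, ← h]
    ring
  exact Nat.eq_of_mul_eq_mul_right
    (by positivity) key

lemma cassini_even (i : ℕ) :
    Nat.fib (2 * i + 1) ^ 2 = Nat.fib (2 * i) * Nat.fib (2 * i + 2) + 1 := by
  induction i with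
  | zero => simp
  | succ n ih =>
    have e1 : Nat.fib (2 * n + 2) = Nat.fib (2 * n) + Nat.fib (2 * n + 1) :=
      Nat.fib_add_two
    have e2 : Nat.fib (2 * n + 3) = Nat.fib (2 * n + 1) + Nat.fib (2 * n + 2) :=
      Nat.fib_add_two
    have e3 : Nat.fib (2 * n + 4) = Nat.fib (2 * n + 2) + Nat.fib (2 * n + 3) :=
      Nat.fib_add_two
    have h23 : 2 * (n + 1) + 1 = 2 * n + 3 := by ring
    have h22 : 2 * (n + 1) = 2 * n + 2 := by ring
    have h24 : 2 * (n + 1) + 2 = 2 * n + 4 := by ring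
    rw [h23, h24, h22, e3, e2, e1]
    nlinarith [ih]

theorem lind_infinite_family (i : ℕ) (hi : 1 ≤ i) :
    Nat.choose (Nat.fib (2 * i + 2) * Nat.fib (2 * i + 3))
               (Nat.fib (2 * i) * Nat.fib (2 * i + 3)) =
    Nat.choose (Nat.fib (2 * i + 2) * Nat.fib (2 * i + 3) - 1)
               (Nat.fib (2 * i) * Nat.fib (2 * i + 3) + 1) := by
  set f0 := Nat.fib (2 * i) with hf0
  set f1 := Nat.fib (2 * i + 1) with hf1
  set f2 := Nat.fib (2 * i + 2) with hf2
  set f3 := Nat.fib (2 * i + 3) with hf3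
  have e1 : f2 = f0 + f1 := Nat.fib_add_two
  have e2 : f3 = f1 + f2 := Nat.fib_add_two
  have hc : f1 ^ 2 = f0 * f2 + 1 := cassini_even i
  have h13 : f1 * f3 = f2 * f2 + 1 := by nlinarith
  have h03 : f0 * f3 + 1 = f1 * f2 := by nlinarith
  have hf2pos : 1 ≤ f2 := Nat.fib_pos.mpr (by omega)
  set k := f0 * f3 with hk
  set e := f2 * f2 - 1 with he
  have he1 : e + 1 = f2 * f2 := by
    have : 1 ≤ f2 * f2 := Nat.one_le_iff_ne_zero.mpr (by positivity)
    omega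
  have he2' : e + 2 = f1 * f3 := by omega
  have hn : f2 * f3 = k + e + 2 := by
    have : f2 * f3 = f0 * f3 + f1 * f3 := by rw [e1]; ring
    omega
  have hmul : (k + e + 2) * (k + 1) = (e + 2) * (e + 1) := by
    rw [← hn, he2', he1, hk]
    calc f2 * f3 * (f0 * f3 + 1) = f2 * f3 * (f1 * f2) := by rw [h03]
      _ = f1 * f3 * (f2 * f2) := by ring
  have hn1 : f2 * f3 - 1 = k + e + 1 := by omega
  rw [hn1, hn]
  exact choose_shift_aux k e hmul
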